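/- Let 𝒢 be a GRN with associated PRN ℛ, let ρ_i ≺ ρ_{i+1} be adjacent super-simple nodes of 𝒢, and let τ be an appendage node of 𝒢. Then there exists a directed cycle in 𝒢 containing τ, containing at least one simple node, such that every simple node on the cycle is a non-super-simple simple node between ρ_i and ρ_{i+1} and every other node on the cycle is appendage, if and only if there exists a directed cycle in ℛ containing both (τ,R) and (τ,P), containing at least one simple node, such that every simple node on the cycle is a non-super-simple simple node between (ρ_i,P) and (ρ_{i+1},R) and every other node on the cycle is appendage. -/

import Mathlib

open List Relation

/- In the PRN on `V × Bool`, the node `(v, false)` is the mRNA node `v^R`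
   and `(v, true)` is the protein node `v^P`. -/

/-- Arrow relation of the PRN associated to a GRN with arrow relation `E`:
arrows `(v,R) → (v,P)` for every `v`, and `(u,P) → (v,R)` whenever `E u v`. -/
def prnAdj {V : Type*} (E : V → V → Prop) : V × Bool → V × Bool → Prop :=
  fun a b =>
    (a.1 = b.1 ∧ a.2 = false ∧ b.2 = true) ∨
    (E a.1 b.1 ∧ a.2 = true ∧ b.2 = false)

/-- The lift of a path `σ₁ → ⋯ → σ_m` in the GRN to the path
`(σ₁,R) → (σ₁,P) → ⋯ → (σ_m,R) → (σ_m,P)` in the PRN. -/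
def liftPath {V : Type*} (l : List V) : List (V × Bool) :=
  l.flatMap fun v => [(v, false), (v, true)]

/-- A simple path: a nonempty directed path visiting each node at most once. -/
def IsSimplePath {V : Type*} (E : V → V → Prop) (l : List V) : Prop :=
  l ≠ [] ∧ l.Chain' E ∧ l.Nodup

/-- A simple path from `a` to `b`. -/
def IsSimplePathFrom {V : Type*} (E : V → V → Prop) (a b : V) (l : List V) : Prop :=
  IsSimplePath E l ∧ l.head? = some a ∧ l.getLast? = some b

/-- A node is simple if it lies on some simple path from the input to the output. -/
def IsSimpleNode {V : Type*} (E : V → V → Prop) (ι o v : V) : Prop :=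
  ∃ l, IsSimplePathFrom E ι o l ∧ v ∈ l

/-- A node is super-simple if it lies on every simple path from the input to the output. -/
def IsSuperSimpleNode {V : Type*} (E : V → V → Prop) (ι o v : V) : Prop :=
  ∀ l, IsSimplePathFrom E ι o l → v ∈ l

/-- A node is appendage if it lies on no simple path from the input to the output. -/
def IsAppendageNode {V : Type*} (E : V → V → Prop) (ι o v : V) : Prop :=
  ¬ IsSimpleNode E ι o v

/-- An appendage path from `a` to `b`: a simple path from `a` to `b` each of whose
nodes, except possibly `a` and `b`, is an appendage node. -/
def IsAppendagePath {V : Type*} (E : V → V → Prop) (ι o a b : V) (l : List V) : Prop :=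
  IsSimplePathFrom E a b l ∧ ∀ v ∈ l, v ≠ a → v ≠ b → IsAppendageNode E ι o v

/-- A directed cycle: a nonempty closed directed walk visiting each of its nodes
exactly once (a self-loop is a cycle of length one). -/
def IsCycle {V : Type*} (E : V → V → Prop) (c : List V) : Prop :=
  c ≠ [] ∧ c.Chain' E ∧ c.Nodup ∧
    ∃ a b, c.head? = some a ∧ c.getLast? = some b ∧ E b a

/-- Arrow relation of the appendage subnetwork: the induced subgraph on appendage nodes. -/
def appendageAdj {V : Type*} (E : V → V → Prop) (ι o : V) : V → V → Prop :=
  fun a b => E a b ∧ IsAppendageNode E ι o a ∧ IsAppendageNode E ι o b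

/-- Two appendage nodes are path-equivalent if each is reachable from the other by a
directed path lying entirely within the appendage subnetwork. -/
def PathEquiv {V : Type*} (E : V → V → Prop) (ι o a b : V) : Prop :=
  Relation.ReflTransGen (appendageAdj E ι o) a b ∧
  Relation.ReflTransGen (appendageAdj E ι o) b a

/-- A node `x` is between `a` and `b` if some input-to-output simple path visits
`a`, `x`, `b` in that order. -/
def Between {V : Type*} (E : V → V → Prop) (ι o a x b : V) : Prop :=
  ∃ l, IsSimplePathFrom E ι o l ∧ [a, x, b].Sublist l

/-!
Lifting `v ↦ (v,R), (v,P)` is a bijection between the simple paths of the GRN and the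
PRN paths that start at an R-node and end at a P-node: along a PRN path R- and P-nodes
alternate, each `(v,R)` being followed by `(v,P)`. It preserves membership and the order of
nodes, so `(v,R)` and `(v,P)` are simple, super-simple or between `(ρ₁,P)` and `(ρ₂,R)` exactly
when `v` is simple, super-simple or between `ρ₁` and `ρ₂`. Likewise the lift of a GRN cycle is
a PRN cycle, and every PRN cycle through an R-node is a rotation of such a lift; the two
conditions on cycles therefore correspond node by node.
-/

section LiftPath

variable {V : Type*}

@[simp] lemma liftPath_nil : liftPath ([] : List V) = [] := rfl

@[simp] lemma liftPath_cons (v : V) (l : List V) :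
    liftPath (v :: l) = (v, false) :: (v, true) :: liftPath l := rfl

@[simp] lemma liftPath_eq_nil {l : List V} : liftPath l = [] ↔ l = [] := by
  cases l <;> simp

@[simp] lemma mem_liftPath {l : List V} {v : V} {b : Bool} : (v, b) ∈ liftPath l ↔ v ∈ l := by
  cases b <;> simp [liftPath]

@[simp] lemma nodup_liftPath {l : List V} : (liftPath l).Nodup ↔ l.Nodup := by
  induction l with
  | nil => simp
  | cons v l ih => simp [ih]

lemma head?_liftPath (l : List V) : (liftPath l).head? = l.head?.map (·, false) := by
  cases l <;> simp

lemma getLast?_liftPath (l : List V) : (liftPath l).getLast? = l.getLast?.map (·, true) := by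
  induction l with
  | nil => simp
  | cons v l ih => cases l <;> simp_all

lemma List.Sublist.liftPath {s l : List V} (h : s <+ l) : liftPath s <+ liftPath l := by
  induction h with
  | slnil => simp
  | cons v _ ih => exact ((ih.cons _).cons _)
  | cons_cons v _ ih => exact ((ih.cons_cons _).cons_cons _)

lemma sublist_of_pair_sublist_liftPath {l : List V} {x c : V} {b : Bool}
    (h : [(x, b), (c, false)] <+ liftPath l) : [x, c] <+ l := by
  induction l with
  | nil => simp at h
  | cons y l ih =>
    simp only [liftPath_cons, sublist_cons_iff, cons.injEq, Prod.mk.injEq] at h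
    rcases h with (h | ⟨_, ⟨⟨rfl, -⟩, rfl⟩, h⟩) | ⟨_, ⟨⟨rfl, -⟩, rfl⟩, h | ⟨_, h, -⟩⟩
    · exact (ih h).cons y
    · exact (singleton_sublist.2 (mem_liftPath.1 (singleton_sublist.1 h))).cons_cons x
    · exact (singleton_sublist.2 (mem_liftPath.1 (singleton_sublist.1 h))).cons_cons x
    · simp at h

lemma sublist_of_triple_sublist_liftPath {l : List V} {a x c : V} {b : Bool}
    (h : [(a, true), (x, b), (c, false)] <+ liftPath l) : [a, x, c] <+ l := by
  induction l with
  | nil => simp at h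
  | cons y l ih =>
    simp only [liftPath_cons, sublist_cons_iff, cons.injEq, Prod.mk.injEq] at h
    rcases h with (h | ⟨_, ⟨⟨rfl, -⟩, rfl⟩, h⟩) | ⟨_, ⟨⟨-, h⟩, -⟩, -⟩
    · exact (ih h).cons y
    · exact (sublist_of_pair_sublist_liftPath h).cons_cons a
    · simp at h

lemma triple_sublist_liftPath_iff {l : List V} {a x c : V} {b : Bool} :
    [(a, true), (x, b), (c, false)] <+ liftPath l ↔ [a, x, c] <+ l := by
  refine ⟨sublist_of_triple_sublist_liftPath, fun h => .trans ?_ h.liftPath⟩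
  cases b <;> simp [sublist_cons_iff]

end LiftPath

section PathsAndCycles

variable {α : Type*} {R : α → α → Prop}

lemma isSimplePath_iff {l : List α} :
    IsSimplePath R l ↔ l ≠ [] ∧ l.IsChain R ∧ l.Nodup :=
  Iff.rfl

lemma isCycle_iff {c : List α} :
    IsCycle R c ↔ c ≠ [] ∧ c.IsChain R ∧ c.Nodup ∧
      ∃ a b, c.head? = some a ∧ c.getLast? = some b ∧ R b a :=
  Iff.rfl

lemma isCycle_iff_cycleChain {c : List α} :
    IsCycle R c ↔ c ≠ [] ∧ c.Nodup ∧ Cycle.Chain R c := by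
  cases c with
  | nil => simp [IsCycle]
  | cons a l =>
    rw [Cycle.chain_coe_cons, ← cons_append, isChain_append]
    simp [isCycle_iff, getLast?_cons, and_left_comm]

lemma IsCycle.of_isRotated {c c' : List α} (h : IsCycle R c) (hr : c ~r c') : IsCycle R c' := by
  rw [isCycle_iff_cycleChain] at h ⊢
  exact ⟨fun hc' => h.1 (isRotated_nil_iff.1 (hc' ▸ hr)), hr.nodup_iff.1 h.2.1,
    Cycle.coe_eq_coe.2 hr ▸ h.2.2⟩

lemma exists_isRotated_head?_eq {l : List α} {a : α} (h : a ∈ l) :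
    ∃ l', l ~r l' ∧ l'.head? = some a := by
  obtain ⟨s, t, rfl⟩ := append_of_mem h
  exact ⟨a :: t ++ s, isRotated_append, rfl⟩

end PathsAndCycles

section PRN

variable {V : Type*} {E : V → V → Prop}

lemma prnAdj_false_left_iff {u : V} {y : V × Bool} : prnAdj E (u, false) y ↔ y = (u, true) := by
  obtain ⟨w, _ | _⟩ := y <;> simp [prnAdj, eq_comm]

lemma prnAdj_true_left_iff {u : V} {y : V × Bool} : prnAdj E (u, true) y ↔ E u y.1 ∧ y.2 = false := by
  simp [prnAdj]

@[simp] lemma isChain_liftPath {l : List V} : (liftPath l).IsChain (prnAdj E) ↔ l.IsChain E := by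
  induction l with
  | nil => simp
  | cons v l ih =>
    simp [isChain_cons, head?_liftPath, prnAdj, ih]

lemma exists_eq_liftPath : ∀ {L : List (V × Bool)}, L.IsChain (prnAdj E) →
    (∀ x ∈ L.head?, x.2 = false) → (∀ x ∈ L.getLast?, x.2 = true) → ∃ l, L = liftPath l
  | [], _, _, _ => ⟨[], rfl⟩
  | [_], _, hhead, hlast => by simp_all
  | (v, b) :: y :: L, hL, hhead, hlast => by
    obtain rfl : b = false := hhead _ rfl
    obtain rfl : y = (v, true) := prnAdj_false_left_iff.1 (isChain_cons_cons.1 hL).1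
    have hL' := (isChain_cons_cons.1 hL).2
    obtain ⟨l, rfl⟩ := exists_eq_liftPath (L := L) hL'.tail
      (fun x hx => (prnAdj_true_left_iff.1 ((isChain_cons.1 hL').1 x hx)).2)
      (fun x hx => hlast x (by simp_all [getLast?_cons]))
    exact ⟨v :: l, rfl⟩

lemma isSimplePathFrom_liftPath_iff {a b : V} {l : List V} :
    IsSimplePathFrom (prnAdj E) (a, false) (b, true) (liftPath l) ↔ IsSimplePathFrom E a b l := by
  simp [IsSimplePathFrom, isSimplePath_iff, head?_liftPath, getLast?_liftPath]

lemma isSimplePathFrom_prnAdj_iff {a b : V} {L : List (V × Bool)} :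
    IsSimplePathFrom (prnAdj E) (a, false) (b, true) L ↔
      ∃ l, L = liftPath l ∧ IsSimplePathFrom E a b l := by
  refine ⟨fun h => ?_, ?_⟩
  · obtain ⟨l, rfl⟩ := exists_eq_liftPath h.1.2.1 (by simp [h.2.1]) (by simp [h.2.2])
    exact ⟨l, rfl, isSimplePathFrom_liftPath_iff.1 h⟩
  · rintro ⟨l, rfl, h⟩
    exact isSimplePathFrom_liftPath_iff.2 h

lemma isCycle_liftPath_iff {c : List V} : IsCycle (prnAdj E) (liftPath c) ↔ IsCycle E c := by
  simp [isCycle_iff, head?_liftPath, getLast?_liftPath, prnAdj]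

lemma IsCycle.exists_isRotated_liftPath {C : List (V × Bool)} (h : IsCycle (prnAdj E) C) {v : V}
    (hv : (v, false) ∈ C) : ∃ c, IsCycle E c ∧ C ~r liftPath c := by
  -- Rotated to start at an R-node, the cycle must end at a P-node (its closing arrow enters an
  -- R-node), so it is a lift.
  obtain ⟨C', hr, hhead⟩ := exists_isRotated_head?_eq hv
  have hC' := h.of_isRotated hr
  obtain ⟨-, hchain, -, a, b, ha, hb, hba⟩ := isCycle_iff.1 hC'
  obtain rfl : a = (v, false) := Option.some_inj.1 (ha.symm.trans hhead)
  obtain ⟨l, rfl⟩ := exists_eq_liftPath hchain (by simp [hhead]) (by simp_all [prnAdj])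
  exact ⟨l, isCycle_liftPath_iff.1 hC', hr⟩

variable {ι o : V}

@[simp] lemma isSimpleNode_prnAdj_iff {v : V} {b : Bool} :
    IsSimpleNode (prnAdj E) (ι, false) (o, true) (v, b) ↔ IsSimpleNode E ι o v := by
  simp [IsSimpleNode, isSimplePathFrom_prnAdj_iff]

@[simp] lemma isSuperSimpleNode_prnAdj_iff {v : V} {b : Bool} :
    IsSuperSimpleNode (prnAdj E) (ι, false) (o, true) (v, b) ↔ IsSuperSimpleNode E ι o v := by
  simp only [IsSuperSimpleNode, isSimplePathFrom_prnAdj_iff, forall_exists_index, and_imp]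
  rw [forall_comm]
  simp

@[simp] lemma between_prnAdj_iff {a x c : V} {b : Bool} :
    Between (prnAdj E) (ι, false) (o, true) (a, true) (x, b) (c, false) ↔ Between E ι o a x c := by
  simp [Between, isSimplePathFrom_prnAdj_iff, triple_sublist_liftPath_iff]

end PRN

theorem stmt_16_general {V : Type*} (E : V → V → Prop) (ι o ρ₁ ρ₂ τ : V) :
    (∃ c : List V, IsCycle E c ∧ τ ∈ c ∧ (∃ v ∈ c, IsSimpleNode E ι o v) ∧
      ∀ v ∈ c,
        (IsSimpleNode E ι o v →
          ¬ IsSuperSimpleNode E ι o v ∧ Between E ι o ρ₁ v ρ₂) ∧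
        (¬ IsSimpleNode E ι o v → IsAppendageNode E ι o v)) ↔
    (∃ C : List (V × Bool), IsCycle (prnAdj E) C ∧ (τ, false) ∈ C ∧ (τ, true) ∈ C ∧
      (∃ x ∈ C, IsSimpleNode (prnAdj E) (ι, false) (o, true) x) ∧
      ∀ x ∈ C,
        (IsSimpleNode (prnAdj E) (ι, false) (o, true) x →
          ¬ IsSuperSimpleNode (prnAdj E) (ι, false) (o, true) x ∧
          Between (prnAdj E) (ι, false) (o, true) (ρ₁, true) x (ρ₂, false)) ∧
        (¬ IsSimpleNode (prnAdj E) (ι, false) (o, true) x →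
          IsAppendageNode (prnAdj E) (ι, false) (o, true) x)) := by
  constructor
  · rintro ⟨c, hc, hτ, ⟨v, hv, hsv⟩, hcond⟩
    refine ⟨liftPath c, isCycle_liftPath_iff.2 hc, mem_liftPath.2 hτ, mem_liftPath.2 hτ,
      ⟨(v, false), mem_liftPath.2 hv, isSimpleNode_prnAdj_iff.2 hsv⟩, ?_⟩
    rintro ⟨v, b⟩ hv
    simpa [IsAppendageNode] using hcond v (mem_liftPath.1 hv)
  · rintro ⟨C, hC, hτ, -, ⟨⟨v, b⟩, hv, hsv⟩, hcond⟩
    obtain ⟨c, hc, hr⟩ := hC.exists_isRotated_liftPath hτ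
    refine ⟨c, hc, mem_liftPath.1 (hr.mem_iff.1 hτ),
      ⟨v, mem_liftPath.1 (hr.mem_iff.1 hv), isSimpleNode_prnAdj_iff.1 hsv⟩, fun v hv => ?_⟩
    simpa [IsAppendageNode] using hcond (v, false) (hr.mem_iff.2 (mem_liftPath.2 hv))

/-- Let `ρ₁ ≺ ρ₂` be adjacent super-simple nodes of the GRN and `τ` an
appendage node of the GRN. There is a directed cycle in the GRN through `τ` containing
at least one simple node, all of whose simple nodes are non-super-simple simple nodes
between `ρ₁` and `ρ₂` and all of whose other nodes are appendage, if and only if there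
is a directed cycle in the PRN through both `(τ,R)` and `(τ,P)` containing at least one
simple node, all of whose simple nodes are non-super-simple simple nodes between
`(ρ₁,P)` and `(ρ₂,R)` and all of whose other nodes are appendage. -/
theorem stmt_16 {V : Type*} [Fintype V] (E : V → V → Prop) (ι o ρ₁ ρ₂ τ : V)
    (hssi : IsSuperSimpleNode E ι o ρ₁) (hssj : IsSuperSimpleNode E ι o ρ₂)
    (horder : ∃ l, IsSimplePathFrom E ι o l ∧ [ρ₁, ρ₂].Sublist l)
    (hadj : ¬ ∃ z, z ≠ ρ₁ ∧ z ≠ ρ₂ ∧ IsSuperSimpleNode E ι o z ∧ Between E ι o ρ₁ z ρ₂)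
    (hτ : IsAppendageNode E ι o τ) :
    (∃ c : List V, IsCycle E c ∧ τ ∈ c ∧ (∃ v ∈ c, IsSimpleNode E ι o v) ∧
      ∀ v ∈ c,
        (IsSimpleNode E ι o v →
          ¬ IsSuperSimpleNode E ι o v ∧ Between E ι o ρ₁ v ρ₂) ∧
        (¬ IsSimpleNode E ι o v → IsAppendageNode E ι o v)) ↔
    (∃ C : List (V × Bool), IsCycle (prnAdj E) C ∧ (τ, false) ∈ C ∧ (τ, true) ∈ C ∧
      (∃ x ∈ C, IsSimpleNode (prnAdj E) (ι, false) (o, true) x) ∧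
      ∀ x ∈ C,
        (IsSimpleNode (prnAdj E) (ι, false) (o, true) x →
          ¬ IsSuperSimpleNode (prnAdj E) (ι, false) (o, true) x ∧
          Between (prnAdj E) (ι, false) (o, true) (ρ₁, true) x (ρ₂, false)) ∧
        (¬ IsSimpleNode (prnAdj E) (ι, false) (o, true) x →
          IsAppendageNode (prnAdj E) (ι, false) (o, true) x)) :=
  stmt_16_general E ι o ρ₁ ρ₂ τ
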